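/- Let u : ∂𝔻 → ℝ be measurable with ‖u‖_∞ < π/(2p) for some 1 ≤ p < ∞, and let Hu denote its Hilbert transform (the boundary-value harmonic conjugate normalized so that (Hu)-extension vanishes at 0). Then e^{Hu} ∈ L^p(∂𝔻) with ‖e^{Hu}‖_p ≤ (2π/cos(p·‖u‖_∞))^{1/p} (Zygmund's inequality). -/

import Mathlib

/-!
For `p > 0` the function `exp (-(p * I * F))` is holomorphic on the disc, with real part
`exp (p * Im F) * cos (p * Re F)`; since `|Re F| ≤ M` and `p * M < π / 2` this is at least
`cos (p * M) * exp (p * Im F) > 0`. By the mean value property its integral over every circle of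
radius `r < 1` is `2π cos (p * Re F 0) ≤ 2π`, because `Im F 0 = 0`. Fatou's lemma as `r → 1⁻`
gives `∫ exp (p * Hu) * cos (p * u) ≤ 2π`, and `cos (p * u) ≥ cos (p * M)` finishes the proof.
-/

open Complex MeasureTheory Filter

open Metric Set Topology

theorem ofReal_mul_exp_mem_ball {r : ℝ} (hr0 : 0 ≤ r) (hr1 : r < 1) (θ : ℝ) :
    (r : ℂ) * Complex.exp (↑θ * I) ∈ ball (0 : ℂ) 1 := by
  rwa [mem_ball, dist_zero_right, norm_mul, norm_exp_ofReal_mul_I, mul_one,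
    Complex.norm_of_nonneg hr0]

theorem ContinuousOn.continuous_comp_ofReal_mul_exp {X : Type*} [TopologicalSpace X]
    {g : ℂ → X} (hg : ContinuousOn g (ball 0 1)) {r : ℝ} (hr0 : 0 ≤ r) (hr1 : r < 1) :
    Continuous fun θ : ℝ => g ((r : ℂ) * Complex.exp (↑θ * I)) :=
  hg.comp_continuous (by fun_prop) (ofReal_mul_exp_mem_ball hr0 hr1)

theorem DifferentiableOn.integral_re_ofReal_mul_exp_eq {G : ℂ → ℂ}
    (hG : DifferentiableOn ℂ G (ball 0 1)) {r : ℝ} (hr0 : 0 ≤ r) (hr1 : r < 1) :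
    ∫ θ in Ioc 0 (2 * Real.pi), (G ((r : ℂ) * Complex.exp (↑θ * I))).re =
      2 * Real.pi * (G 0).re := by
  have hmean := (hG.diffContOnCl_ball (R := |r|)
    (closedBall_subset_ball (by rwa [abs_of_nonneg hr0]))).circleAverage
  rw [Real.circleAverage_def, inv_smul_eq_iff₀ (by positivity),
    intervalIntegral.integral_of_le (by positivity)] at hmean
  simp only [circleMap_zero] at hmean
  calc _ = (∫ θ in Ioc 0 (2 * Real.pi), G ((r : ℂ) * Complex.exp (↑θ * I))).re :=
        integral_re ((hG.continuousOn.continuous_comp_ofReal_mul_exp hr0 hr1).integrableOn_Ioc)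
    _ = 2 * Real.pi * (G 0).re := by rw [hmean, real_smul, re_ofReal_mul]

theorem re_exp_neg_ofReal_mul_I_mul (p : ℝ) (w : ℂ) :
    (Complex.exp (-(p * I * w))).re = Real.exp (p * w.im) * Real.cos (p * w.re) := by
  simp [exp_re, Real.cos_neg]

theorem DifferentiableOn.integral_exp_mul_im_mul_cos_mul_re_eq {F : ℂ → ℂ}
    (hF : DifferentiableOn ℂ F (ball 0 1)) (p : ℝ) {r : ℝ} (hr0 : 0 ≤ r) (hr1 : r < 1) :
    ∫ θ in Ioc 0 (2 * Real.pi), Real.exp (p * (F ((r : ℂ) * Complex.exp (↑θ * I))).im) *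
        Real.cos (p * (F ((r : ℂ) * Complex.exp (↑θ * I))).re) =
      2 * Real.pi * (Real.exp (p * (F 0).im) * Real.cos (p * (F 0).re)) := by
  simpa only [re_exp_neg_ofReal_mul_I_mul] using
    DifferentiableOn.integral_re_ofReal_mul_exp_eq (G := fun z => Complex.exp (-(p * I * F z)))
      (by fun_prop) hr0 hr1

theorem exists_seq_mem_Ioo_tendsto_nhdsLT {α : Type*} [LinearOrder α] [TopologicalSpace α]
    [DenselyOrdered α] [OrderTopology α] [FirstCountableTopology α] {a b : α} (hab : a < b) :
    ∃ r : ℕ → α, (∀ n, r n ∈ Ioo a b) ∧ Tendsto r atTop (𝓝[<] b) := by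
  obtain ⟨r, -, hr, hlim⟩ := exists_seq_strictMono_tendsto' hab
  exact ⟨r, hr, tendsto_nhdsWithin_iff.mpr ⟨hlim, .of_forall fun n => (hr n).2⟩⟩

theorem aemeasurable_of_tendsto_ofReal_mul_exp {μ : Measure ℝ} {g : ℂ → ℝ}
    (hg : ContinuousOn g (ball 0 1)) {h : ℝ → ℝ}
    (hh : ∀ᵐ θ : ℝ ∂μ, Tendsto (fun r : ℝ => g ((r : ℂ) * Complex.exp (↑θ * I))) (𝓝[<] 1)
      (𝓝 (h θ))) :
    AEMeasurable h μ := by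
  obtain ⟨r, hr, hlim⟩ := exists_seq_mem_Ioo_tendsto_nhdsLT (zero_lt_one' ℝ)
  exact aemeasurable_of_tendsto_metrizable_ae atTop
    (fun n => (hg.continuous_comp_ofReal_mul_exp (hr n).1.le (hr n).2).aemeasurable)
    (hh.mono fun θ hθ => hθ.comp hlim)

theorem lintegral_ofReal_le_of_tendsto_ofReal_mul_exp {g : ℂ → ℝ}
    (hg : ContinuousOn g (ball 0 1)) (hg0 : ∀ z ∈ ball (0 : ℂ) 1, 0 ≤ g z) {C : ℝ}
    (hC : ∀ r ∈ Ioo (0 : ℝ) 1,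
      ∫ θ in Ioc 0 (2 * Real.pi), g ((r : ℂ) * Complex.exp (↑θ * I)) ≤ C)
    {h : ℝ → ℝ}
    (hh : ∀ᵐ θ : ℝ, Tendsto (fun r : ℝ => g ((r : ℂ) * Complex.exp (↑θ * I))) (𝓝[<] 1)
      (𝓝 (h θ))) :
    ∫⁻ θ in Ioc 0 (2 * Real.pi), ENNReal.ofReal (h θ) ≤ ENNReal.ofReal C := by
  obtain ⟨r, hr, hlim⟩ := exists_seq_mem_Ioo_tendsto_nhdsLT (zero_lt_one' ℝ)
  have hcont n := hg.continuous_comp_ofReal_mul_exp (hr n).1.le (hr n).2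
  have hbound n : ∫⁻ θ in Ioc 0 (2 * Real.pi),
      ENNReal.ofReal (g ((r n : ℂ) * Complex.exp (↑θ * I))) ≤ ENNReal.ofReal C := by
    rw [← ofReal_integral_eq_lintegral_ofReal (hcont n).integrableOn_Ioc
      (.of_forall fun θ => hg0 _ (ofReal_mul_exp_mem_ball (hr n).1.le (hr n).2 θ))]
    exact ENNReal.ofReal_le_ofReal (hC _ (hr n))
  calc ∫⁻ θ in Ioc 0 (2 * Real.pi), ENNReal.ofReal (h θ)
      = ∫⁻ θ in Ioc 0 (2 * Real.pi),
          liminf (fun n => ENNReal.ofReal (g ((r n : ℂ) * Complex.exp (↑θ * I)))) atTop := by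
        refine lintegral_congr_ae ?_
        filter_upwards [ae_restrict_of_ae hh] with θ hθ
        exact ((ENNReal.continuous_ofReal.tendsto _).comp (hθ.comp hlim)).liminf_eq.symm
    _ ≤ liminf (fun n => ∫⁻ θ in Ioc 0 (2 * Real.pi),
          ENNReal.ofReal (g ((r n : ℂ) * Complex.exp (↑θ * I)))) atTop :=
        lintegral_liminf_le fun n => (hcont n).measurable.ennreal_ofReal
    _ ≤ ENNReal.ofReal C := liminf_le_of_frequently_le' (.of_forall hbound)

theorem integrable_and_integral_le_of_lintegral_ofReal_le {α : Type*} [MeasurableSpace α]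
    {μ : Measure α} {f : α → ℝ} (hf : AEStronglyMeasurable f μ) (hf0 : 0 ≤ᵐ[μ] f) {C : ℝ}
    (hC : 0 ≤ C) (h : ∫⁻ a, ENNReal.ofReal (f a) ∂μ ≤ ENNReal.ofReal C) :
    Integrable f μ ∧ ∫ a, f a ∂μ ≤ C := by
  refine ⟨(lintegral_ofReal_ne_top_iff_integrable hf hf0).mp (ne_top_of_le_ne_top
    ENNReal.ofReal_ne_top h), ?_⟩
  rw [integral_eq_lintegral_of_nonneg_ae hf0 hf, ← ENNReal.toReal_ofReal hC]
  exact ENNReal.toReal_mono ENNReal.ofReal_ne_top h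

theorem cos_mul_le_cos_mul_of_abs_le {p M x : ℝ} (hp : 0 ≤ p) (hpM : p * M ≤ Real.pi)
    (hx : |x| ≤ M) : Real.cos (p * M) ≤ Real.cos (p * x) := by
  rw [← Real.cos_abs (p * x), abs_mul, abs_of_nonneg hp]
  exact Real.cos_le_cos_of_nonneg_of_le_pi (by positivity) hpM
    (mul_le_mul_of_nonneg_left hx hp)

theorem lintegral_exp_mul_mul_cos_mul_le {F : ℂ → ℂ} (hFd : DifferentiableOn ℂ F (ball 0 1))
    (hF0 : (F 0).im = 0) {p : ℝ} (hcos : ∀ z ∈ ball (0 : ℂ) 1, 0 ≤ Real.cos (p * (F z).re))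
    {u v : ℝ → ℝ}
    (hbdry : ∀ᵐ θ : ℝ,
      Tendsto (fun r : ℝ => (F ((r : ℂ) * Complex.exp (↑θ * I))).re) (𝓝[<] 1) (𝓝 (u θ)) ∧
      Tendsto (fun r : ℝ => (F ((r : ℂ) * Complex.exp (↑θ * I))).im) (𝓝[<] 1) (𝓝 (v θ))) :
    ∫⁻ θ in Ioc 0 (2 * Real.pi), ENNReal.ofReal (Real.exp (p * v θ) * Real.cos (p * u θ)) ≤
      ENNReal.ofReal (2 * Real.pi) := by
  set g : ℂ → ℝ := fun z => Real.exp (p * (F z).im) * Real.cos (p * (F z).re)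
  have hg : ContinuousOn g (ball 0 1) := by
    have := hFd.continuousOn
    fun_prop
  have hg0 z (hz : z ∈ ball (0 : ℂ) 1) : 0 ≤ g z := mul_nonneg (Real.exp_pos _).le (hcos z hz)
  have hg_int : ∀ r ∈ Ioo (0 : ℝ) 1,
      ∫ θ in Ioc 0 (2 * Real.pi), g ((r : ℂ) * Complex.exp (↑θ * I)) ≤ 2 * Real.pi := by
    intro r hr
    rw [hFd.integral_exp_mul_im_mul_cos_mul_re_eq p hr.1.le hr.2, hF0, mul_zero, Real.exp_zero,
      one_mul]
    exact mul_le_of_le_one_right (by positivity) (Real.cos_le_one _)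
  refine lintegral_ofReal_le_of_tendsto_ofReal_mul_exp hg hg0 hg_int ?_
  filter_upwards [hbdry] with θ ⟨hre, him⟩
  exact (him.const_mul p).rexp.mul ((Real.continuous_cos.tendsto _).comp (hre.const_mul p))

/-- Zygmund's inequality: if `‖u‖_∞ ≤ M < π/(2p)` and `Hu` is the boundary value of the
harmonic conjugate (normalized to vanish at `0`) of the bounded harmonic extension of `u`,
then `‖e^{Hu}‖_p ≤ (2π / cos(p M))^{1/p}`. The harmonic extension is encoded by a
holomorphic function `F` on the disc with `Im F 0 = 0`, `|Re F| ≤ M`, whose real and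
imaginary parts have radial boundary values `u` and `Hu` almost everywhere. -/
theorem stmt_13 (p M : ℝ) (hp : 1 ≤ p) (hM : 0 ≤ M) (hMp : M < Real.pi / (2 * p))
    (u Hu : ℝ → ℝ) (hu : ∀ θ : ℝ, |u θ| ≤ M)
    (F : ℂ → ℂ)
    (hFd : DifferentiableOn ℂ F (Metric.ball (0:ℂ) 1))
    (hF0 : (F 0).im = 0)
    (hFbd : ∀ z ∈ Metric.ball (0:ℂ) 1, |(F z).re| ≤ M)
    (hbdry : ∀ᵐ θ : ℝ ∂volume,
      Tendsto (fun r : ℝ => (F ((r : ℂ) * Complex.exp (θ * Complex.I))).re)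
          (nhdsWithin 1 (Set.Iio 1)) (nhds (u θ)) ∧
      Tendsto (fun r : ℝ => (F ((r : ℂ) * Complex.exp (θ * Complex.I))).im)
          (nhdsWithin 1 (Set.Iio 1)) (nhds (Hu θ))) :
    IntegrableOn (fun θ : ℝ => Real.exp (Hu θ) ^ p) (Set.Ioc 0 (2 * Real.pi)) volume ∧
    (∫ θ in Set.Ioc (0:ℝ) (2 * Real.pi), Real.exp (Hu θ) ^ p) ^ (1/p) ≤
      (2 * Real.pi / Real.cos (p * M)) ^ (1/p) := by
  have hp0 : 0 < p := zero_lt_one.trans_le hp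
  have hpM : p * M < Real.pi / 2 := by
    have := (lt_div_iff₀ (by positivity)).mp hMp
    linarith
  have hcos : 0 < Real.cos (p * M) :=
    Real.cos_pos_of_mem_Ioo ⟨by nlinarith [Real.pi_pos, mul_nonneg hp0.le hM], hpM⟩
  have hcos_le x (hx : |x| ≤ M) : Real.cos (p * M) ≤ Real.cos (p * x) :=
    cos_mul_le_cos_mul_of_abs_le hp0.le (by linarith [Real.pi_pos]) hx
  have hexp_le θ : ENNReal.ofReal (Real.exp (p * Hu θ)) ≤ ENNReal.ofReal (Real.cos (p * M))⁻¹ *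
      ENNReal.ofReal (Real.exp (p * Hu θ) * Real.cos (p * u θ)) := by
    rw [← ENNReal.ofReal_mul (by positivity), inv_mul_eq_div]
    refine ENNReal.ofReal_le_ofReal ((le_div_iff₀ hcos).mpr ?_)
    exact mul_le_mul_of_nonneg_left (hcos_le _ (hu θ)) (Real.exp_pos _).le
  have hlint : ∫⁻ θ in Ioc 0 (2 * Real.pi), ENNReal.ofReal (Real.exp (p * Hu θ)) ≤
      ENNReal.ofReal (2 * Real.pi / Real.cos (p * M)) := by
    refine (lintegral_mono hexp_le).trans ?_
    rw [lintegral_const_mul' _ _ ENNReal.ofReal_ne_top, div_eq_inv_mul,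
      ENNReal.ofReal_mul (by positivity)]
    gcongr
    exact lintegral_exp_mul_mul_cos_mul_le hFd hF0
      (fun z hz => hcos.le.trans (hcos_le _ (hFbd z hz))) hbdry
  have hHu : AEMeasurable Hu :=
    aemeasurable_of_tendsto_ofReal_mul_exp (continuous_im.comp_continuousOn hFd.continuousOn)
      (hbdry.mono fun _ h => h.2)
  obtain ⟨hint, hle⟩ := integrable_and_integral_le_of_lintegral_ofReal_le
    (hHu.const_mul p).exp.aestronglyMeasurable.restrict
    (.of_forall fun _ => (Real.exp_pos _).le) (by positivity) hlint
  simp_rw [← Real.exp_mul, mul_comm _ p]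
  exact ⟨hint, Real.rpow_le_rpow (setIntegral_nonneg measurableSet_Ioc fun _ _ =>
    (Real.exp_pos _).le) hle (by positivity)⟩
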